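/- arXiv:2605.15833 — 8 statements merged into one kernel-verified Lean document; each statement's English description precedes it below -/
import Mathlib

section
/- In the roundabout exploration model, for every t ∈ [N], no two active agents are in the same state after step t: for all distinct agents a_i, a_j ∈ A(t), s_i(t) ≠ s_j(t). -/
/-- The circular interval `⟨i, j⟩` on `Fin N`: all states encountered when moving
forward from `i` to `j` along the cycle `(0, 1, …, N-1, 0)`. -/
def cInt {N : ℕ} (i j : Fin N) : Set (Fin N) := {x | (x - i).val ≤ (j - i).val}

/-- The half-open circular interval `⟨i, j)` on `Fin N`, which excludes the right
endpoint `j`. -/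
def cIntHalf {N : ℕ} (i j : Fin N) : Set (Fin N) := cInt i j \ {j}

/-- The roundabout exploration model on the state set `Fin N`:
`avail t` is the set of positions available at step `t` (steps `t = 1, …, N` are
relevant), `state i t` is the state of agent `a_i` after step `t`, and `active t`
is the set of (indices of) active agents after step `t`. Agent `a_i` starts at
state `i`, moves forward one position (cyclically) at step `t` whenever its
current position is available, and stays put otherwise. Active agents satisfy:
initially all agents are active, the active sets are decreasing, elimination
preserves coverage of visited states, and every active agent is non-redundant. -/
structure Roundabout (N : ℕ) [NeZero N] where
  avail : ℕ → Set (Fin N)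
  state : Fin N → ℕ → Fin N
  active : ℕ → Set (Fin N)
  state_zero : ∀ i, state i 0 = i
  state_succ_of_mem : ∀ i t, state i t ∈ avail (t + 1) → state i (t + 1) = state i t + 1
  state_succ_of_not_mem : ∀ i t, state i t ∉ avail (t + 1) → state i (t + 1) = state i t
  active_zero : active 0 = Set.univ
  active_mono : ∀ t, active (t + 1) ⊆ active t
  active_cover : ∀ t, (⋃ j ∈ active (t + 1), cInt j (state j (t + 1)))
      = ⋃ j ∈ active t, cInt j (state j (t + 1))
  active_nonredundant : ∀ t, ∀ i ∈ active (t + 1),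
      ¬ cInt i (state i (t + 1)) ⊆ ⋃ j ∈ active (t + 1) \ {i}, cInt j (state j (t + 1))

/-- `D_i(t)`, the set of states visited by agent `a_i` up to step `t`. -/
def Roundabout.visited {N : ℕ} [NeZero N] (R : Roundabout N) (i : Fin N) (t : ℕ) :
    Set (Fin N) := cInt i (R.state i t)

/-- The roundabout model is `k`-deficient: at every step `t ∈ [N]`, at most `2k`
positions are unavailable. -/
def Roundabout.KDeficient {N : ℕ} [NeZero N] (R : Roundabout N) (k : ℕ) : Prop :=
  ∀ t : ℕ, 1 ≤ t → t ≤ N → ((R.avail t)ᶜ : Set (Fin N)).ncard ≤ 2 * k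

/-!
Two circular intervals ending at the same state `q` are nested: `x ∈ ⟨i, q⟩` exactly when the
backward distance from `q` to `x` is at most the backward distance from `q` to `i`, so the interval
of the agent farther behind `q` contains the other. Hence two active agents sharing a state would
make one of them redundant.
-/

lemma Fin.val_le_val_add_iff {N : ℕ} (a b : Fin N) : a.val ≤ (a + b).val ↔ a.val + b.val < N := by
  have := b.isLt
  rw [Fin.val_add_eq_ite]
  split_ifs <;> omega

lemma mem_cInt_iff {N : ℕ} [NeZero N] (i q x : Fin N) :
    x ∈ cInt i q ↔ (q - x).val ≤ (q - i).val := by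
  have hxq : (x - i) + (q - x) = q - i := by abel
  have hqx : (q - x) + (x - i) = q - i := by abel
  change (x - i).val ≤ (q - i).val ↔ _
  rw [← hxq, Fin.val_le_val_add_iff, add_comm, ← Fin.val_le_val_add_iff, hqx, hxq]

lemma cInt_subset_cInt_of_val_le {N : ℕ} [NeZero N] {i j q : Fin N}
    (h : (q - j).val ≤ (q - i).val) : cInt j q ⊆ cInt i q := fun x hx => by
  rw [mem_cInt_iff] at hx ⊢
  exact hx.trans h

lemma cInt_subset_or_subset {N : ℕ} [NeZero N] (i j q : Fin N) :
    cInt i q ⊆ cInt j q ∨ cInt j q ⊆ cInt i q :=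
  (le_total (q - i).val (q - j).val).imp cInt_subset_cInt_of_val_le cInt_subset_cInt_of_val_le

namespace Roundabout

variable {N : ℕ} [NeZero N] (R : Roundabout N)

lemma not_visited_subset_of_mem_active {t : ℕ} {i j : Fin N} (hi : i ∈ R.active (t + 1))
    (hj : j ∈ R.active (t + 1)) (hij : i ≠ j) : ¬ R.visited i (t + 1) ⊆ R.visited j (t + 1) :=
  fun hsub => R.active_nonredundant t i hi fun _ hx =>
    Set.mem_biUnion ⟨hj, hij.symm⟩ (hsub hx)

end Roundabout

theorem roundabout_distinct_states_general {N : ℕ} [NeZero N] (R : Roundabout N)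
    (t : ℕ)
    (i j : Fin N) (hi : i ∈ R.active t) (hj : j ∈ R.active t) (hij : i ≠ j) :
    R.state i t ≠ R.state j t := by
  intro heq
  cases t with
  | zero => exact hij (by simpa only [R.state_zero] using heq)
  | succ t =>
    have hnested : R.visited i (t + 1) ⊆ R.visited j (t + 1) ∨
        R.visited j (t + 1) ⊆ R.visited i (t + 1) := by
      simpa only [Roundabout.visited, heq] using cInt_subset_or_subset i j (R.state j (t + 1))
    rcases hnested with hsub | hsub
    · exact R.not_visited_subset_of_mem_active hi hj hij hsub
    · exact R.not_visited_subset_of_mem_active hj hi hij.symm hsub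

/-- **Lemma (distinct states).** For every `t ∈ [N]`, no two active agents are in the
same state after step `t`. -/
theorem roundabout_distinct_states {N : ℕ} [NeZero N] (R : Roundabout N)
    (t : ℕ) (ht1 : 1 ≤ t) (ht : t ≤ N)
    (i j : Fin N) (hi : i ∈ R.active t) (hj : j ∈ R.active t) (hij : i ≠ j) :
    R.state i t ≠ R.state j t :=
  roundabout_distinct_states_general R t i j hi hj hij
end

section
/- In the roundabout exploration model, for every t ∈ [N], no state has been visited by three agents that are active after step t: there do not exist pairwise distinct agents a_i, a_j, a_k ∈ A(t) such that D_i(t) ∩ D_j(t) ∩ D_k(t) ≠ ∅. -/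
/-- Characterization of membership in a circular interval containing `x`,
in terms of the forward distance from `x`. -/
lemma cInt_mem_iff {N : ℕ} [NeZero N] (i p x y : Fin N) (hx : x ∈ cInt i p) :
    y ∈ cInt i p ↔ ((y - x).val ≤ (p - i).val - (x - i).val ∨
      N - (x - i).val ≤ (y - x).val) := by
  simp only [cInt, Set.mem_setOf_eq] at hx ⊢
  have hyi : (y - i).val = ((y - x).val + (x - i).val) % N := by
    rw [← sub_add_sub_cancel y x i, Fin.val_add]
  rw [hyi]
  have hrN : (y - x).val < N := (y - x).isLt
  have hLN : (p - i).val < N := (p - i).isLt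
  rcases lt_or_ge ((y - x).val + (x - i).val) N with h | h
  · rw [Nat.mod_eq_of_lt h]
    omega
  · have hmod : ((y - x).val + (x - i).val) % N = (y - x).val + (x - i).val - N := by
      rw [Nat.mod_eq_sub_mod h, Nat.mod_eq_of_lt (by omega)]
    rw [hmod]
    omega

/-- **Lemma (no state visited by three active agents).** For every `t ∈ [N]`, there
are no three pairwise distinct active agents whose visited-state sets have a common
element. -/
theorem roundabout_no_triple_visit {N : ℕ} [NeZero N] (R : Roundabout N)
    (t : ℕ) (ht1 : 1 ≤ t) (ht : t ≤ N) :
    ¬ ∃ i j l : Fin N, i ∈ R.active t ∧ j ∈ R.active t ∧ l ∈ R.active t ∧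
      i ≠ j ∧ i ≠ l ∧ j ≠ l ∧
      (R.visited i t ∩ R.visited j t ∩ R.visited l t).Nonempty := by
  rintro ⟨i, j, l, hi, hj, hl, hij, hil, hjl, x, ⟨⟨hxi, hxj⟩, hxl⟩⟩
  obtain ⟨s, rfl⟩ : ∃ s, t = s + 1 := ⟨t - 1, by omega⟩
  simp only [Roundabout.visited] at hxi hxj hxl
  set Dv : Fin N → ℕ := fun m => (x - m).val with hDv
  set Ev : Fin N → ℕ := fun m => (R.state m (s + 1) - m).val - (x - m).val with hEv
  have key : ∀ m p q : Fin N, m ∈ R.active (s + 1) → p ∈ R.active (s + 1) →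
      q ∈ R.active (s + 1) → p ≠ m → q ≠ m →
      x ∈ cInt m (R.state m (s + 1)) → x ∈ cInt p (R.state p (s + 1)) →
      x ∈ cInt q (R.state q (s + 1)) →
      Dv m ≤ Dv p → Ev m ≤ Ev q → False := by
    intro m p q hm hp hq hpm hqm hxm hxp hxq hdp heq
    apply R.active_nonredundant s m hm
    intro y hy
    have hy' := (cInt_mem_iff m _ x y hxm).mp hy
    simp only [Set.mem_iUnion, Set.mem_diff, Set.mem_singleton_iff, exists_prop]
    rcases hy' with h | h
    · refine ⟨q, ⟨hq, hqm⟩, (cInt_mem_iff q _ x y hxq).mpr (Or.inl ?_)⟩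
      exact le_trans h heq
    · refine ⟨p, ⟨hp, hpm⟩, (cInt_mem_iff p _ x y hxp).mpr (Or.inr ?_)⟩
      have hd : (x - m).val ≤ (x - p).val := hdp
      omega
  rcases le_total (Dv i) (Dv j) with h1 | h1
  · rcases le_total (Dv j) (Dv l) with h2 | h2
    · rcases le_total (Ev i) (Ev j) with h3 | h3
      · exact key i l j hi hl hj (Ne.symm hil) (Ne.symm hij) hxi hxl hxj (le_trans h1 h2) h3
      · exact key j l i hj hl hi (Ne.symm hjl) hij hxj hxl hxi h2 h3
    · rcases le_total (Ev i) (Ev l) with h3 | h3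
      · exact key i j l hi hj hl (Ne.symm hij) (Ne.symm hil) hxi hxj hxl h1 h3
      · exact key l j i hl hj hi hjl hil hxl hxj hxi h2 h3
  · rcases le_total (Dv i) (Dv l) with h2 | h2
    · rcases le_total (Ev i) (Ev j) with h3 | h3
      · exact key i l j hi hl hj (Ne.symm hil) (Ne.symm hij) hxi hxl hxj h2 h3
      · exact key j l i hj hl hi (Ne.symm hjl) hij hxj hxl hxi (le_trans h1 h2) h3
    · rcases le_total (Ev j) (Ev l) with h3 | h3
      · exact key j i l hj hi hl hij (Ne.symm hjl) hxj hxi hxl h1 h3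
      · exact key l i j hl hi hj hil hjl hxl hxi hxj h2 h3
end

section
/- In the roundabout exploration model, for every t ∈ [N], the sum of the sizes of the visited-state sets of the active agents satisfies ∑_{a_i ∈ A(t)} |D_i(t)| ≤ 2N − |A(t)|. -/
open Finset

theorem Finset.sum_ncard_add_card_le {α ι : Type*} [Fintype α] (A : Finset ι) (D : ι → Set α)
    (hthree : ∀ x, ∀ i ∈ A, ∀ j ∈ A, ∀ k ∈ A, i ≠ j → i ≠ k → j ≠ k →
      x ∈ D i → x ∈ D j → x ∈ D k → False)
    (hpriv : ∀ i ∈ A, ∃ x ∈ D i, ∀ j ∈ A, x ∈ D j → j = i) :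
    ∑ i ∈ A, (D i).ncard + #A ≤ 2 * Fintype.card α := by
  classical
  set μ : α → ℕ := fun x => #{i ∈ A | x ∈ D i}
  have hdouble : ∑ i ∈ A, (D i).ncard = ∑ x, μ x := by
    simp only [μ, card_filter]
    rw [sum_comm]
    refine sum_congr rfl fun i _ => ?_
    rw [← card_filter, ← Set.ncard_coe_finset]
    simp
  have hμ : ∀ x, μ x ≤ 2 := fun x => by
    by_contra! h
    obtain ⟨i, hi, j, hj, k, hk, hij, hik, hjk⟩ := two_lt_card.mp h
    simp only [mem_filter] at hi hj hk
    exact hthree x i hi.1 j hj.1 k hk.1 hij hik hjk hi.2 hj.2 hk.2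
  have hA : #A ≤ #{x | μ x = 1} := by
    refine card_le_card_of_forall_subsingleton (fun i x => x ∈ D i) (fun i hi => ?_)
      fun x hx i hi j hj => card_le_one.mp (mem_filter.mp hx).2.le i (mem_filter.mpr hi) j
        (mem_filter.mpr hj)
    obtain ⟨x, hxi, hx⟩ := hpriv i hi
    refine ⟨x, mem_filter.mpr ⟨mem_univ x, card_eq_one.mpr ⟨i, ?_⟩⟩, hxi⟩
    ext j
    simp only [mem_filter, mem_singleton]
    exact ⟨fun hj => hx j hj.1 hj.2, fun h => h ▸ ⟨hi, hxi⟩⟩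
  have hsum : ∑ x, μ x + #{x | μ x = 1} ≤ 2 * Fintype.card α := by
    rw [card_filter, ← sum_add_distrib, mul_comm, ← smul_eq_mul, ← card_univ, ← sum_const]
    exact sum_le_sum fun x _ => by have := hμ x; split_ifs <;> omega
  omega

section Arcs

variable {N : ℕ} [NeZero N]

theorem cInt_self (i : Fin N) : cInt i i = {i} := by
  ext x
  simp [cInt, Fin.val_eq_zero_iff, sub_eq_zero]

theorem mem_cInt_iff_of_mem {i a x y : Fin N} (hx : x ∈ cInt i a) :
    y ∈ cInt i a ↔ (y - x).val ≤ (a - x).val ∨ N - (x - i).val ≤ (y - x).val := by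
  have hx : (x - i).val ≤ (a - i).val := hx
  change (y - i).val ≤ (a - i).val ↔ _
  rw [show y - i = (y - x) + (x - i) by abel, show a - i = (a - x) + (x - i) by abel,
    Fin.val_add_eq_ite, Fin.val_add_eq_ite] at *
  have := (y - x).isLt
  have := (a - x).isLt
  have := (x - i).isLt
  split_ifs at * <;> omega

theorem cInt_subset_union_of_le_max {i a i₁ a₁ i₂ a₂ x : Fin N} (hx : x ∈ cInt i a)
    (hx₁ : x ∈ cInt i₁ a₁) (hx₂ : x ∈ cInt i₂ a₂)
    (hback : (x - i).val ≤ max (x - i₁).val (x - i₂).val)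
    (hfwd : (a - x).val ≤ max (a₁ - x).val (a₂ - x).val) :
    cInt i a ⊆ cInt i₁ a₁ ∪ cInt i₂ a₂ := by
  intro y hy
  rw [Set.mem_union, mem_cInt_iff_of_mem hx₁, mem_cInt_iff_of_mem hx₂]
  rw [mem_cInt_iff_of_mem hx] at hy
  omega

theorem cInt_subset_union_of_mem {i₁ a₁ i₂ a₂ i₃ a₃ x : Fin N}
    (hx₁ : x ∈ cInt i₁ a₁) (hx₂ : x ∈ cInt i₂ a₂) (hx₃ : x ∈ cInt i₃ a₃) :
    cInt i₁ a₁ ⊆ cInt i₂ a₂ ∪ cInt i₃ a₃ ∨ cInt i₂ a₂ ⊆ cInt i₁ a₁ ∪ cInt i₃ a₃ ∨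
      cInt i₃ a₃ ⊆ cInt i₁ a₁ ∪ cInt i₂ a₂ := by
  -- At most two of the arcs reach strictly farthest back or forward from `x`.
  have : ((x - i₁).val ≤ max (x - i₂).val (x - i₃).val ∧
        (a₁ - x).val ≤ max (a₂ - x).val (a₃ - x).val) ∨
      ((x - i₂).val ≤ max (x - i₁).val (x - i₃).val ∧
        (a₂ - x).val ≤ max (a₁ - x).val (a₃ - x).val) ∨
      ((x - i₃).val ≤ max (x - i₁).val (x - i₂).val ∧
        (a₃ - x).val ≤ max (a₁ - x).val (a₂ - x).val) := by
    omega
  rcases this with ⟨hb, hf⟩ | ⟨hb, hf⟩ | ⟨hb, hf⟩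
  · exact .inl (cInt_subset_union_of_le_max hx₁ hx₂ hx₃ hb hf)
  · exact .inr (.inl (cInt_subset_union_of_le_max hx₂ hx₁ hx₃ hb hf))
  · exact .inr (.inr (cInt_subset_union_of_le_max hx₃ hx₁ hx₂ hb hf))

end Arcs

namespace Roundabout

variable {N : ℕ} [NeZero N] (R : Roundabout N)

theorem visited_not_subset (t : ℕ) {i : Fin N} (hi : i ∈ R.active t) :
    ¬ R.visited i t ⊆ ⋃ j ∈ R.active t \ {i}, R.visited j t := by
  cases t with
  | zero =>
    simp [visited, R.state_zero, cInt_self]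
  | succ t => exact R.active_nonredundant t i hi

theorem exists_mem_visited_forall_eq (t : ℕ) {i : Fin N} (hi : i ∈ R.active t) :
    ∃ x ∈ R.visited i t, ∀ j ∈ R.active t, x ∈ R.visited j t → j = i := by
  obtain ⟨x, hxi, hx⟩ := Set.not_subset.mp (R.visited_not_subset t hi)
  exact ⟨x, hxi, fun j hj hxj => by_contra fun hji => hx (Set.mem_biUnion ⟨hj, hji⟩ hxj)⟩

theorem false_of_mem_visited_three (t : ℕ) {x i j k : Fin N} (hi : i ∈ R.active t)
    (hj : j ∈ R.active t) (hk : k ∈ R.active t) (hij : i ≠ j) (hik : i ≠ k) (hjk : j ≠ k)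
    (hxi : x ∈ R.visited i t) (hxj : x ∈ R.visited j t) (hxk : x ∈ R.visited k t) : False := by
  have covered : ∀ {m a b}, m ∈ R.active t → a ∈ R.active t → b ∈ R.active t → a ≠ m → b ≠ m →
      ¬ R.visited m t ⊆ R.visited a t ∪ R.visited b t := fun hm ha hb ham hbm hsub =>
    R.visited_not_subset t hm <| hsub.trans <| Set.union_subset
      (Set.subset_biUnion_of_mem (u := (R.visited · t)) ⟨ha, ham⟩)
      (Set.subset_biUnion_of_mem (u := (R.visited · t)) ⟨hb, hbm⟩)
  rcases cInt_subset_union_of_mem hxi hxj hxk with h | h | h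
  · exact covered hi hj hk hij.symm hik.symm h
  · exact covered hj hi hk hij hjk.symm h
  · exact covered hk hi hj hik hjk h

end Roundabout

theorem roundabout_sum_of_states_general {N : ℕ} [NeZero N] (R : Roundabout N)
    (t : ℕ) :
    ∑ i ∈ (R.active t).toFinite.toFinset, (R.visited i t).ncard
      ≤ 2 * N - (R.active t).ncard := by
  have h := Finset.sum_ncard_add_card_le (R.active t).toFinite.toFinset (R.visited · t)
    (by simpa only [Set.Finite.mem_toFinset] using fun x i hi j hj k hk =>
      R.false_of_mem_visited_three t hi hj hk)
    (by simpa only [Set.Finite.mem_toFinset] using fun i => R.exists_mem_visited_forall_eq t)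
  rw [Fintype.card_fin, ← Set.ncard_eq_toFinset_card] at h
  omega

/-- **Lemma (sum of visited-state set sizes).** For every `t ∈ [N]`,
`∑_{a_i ∈ A(t)} |D_i(t)| ≤ 2N - |A(t)|`. -/
theorem roundabout_sum_of_states {N : ℕ} [NeZero N] (R : Roundabout N)
    (t : ℕ) (ht1 : 1 ≤ t) (ht : t ≤ N) :
    ∑ i ∈ (R.active t).toFinite.toFinset, (R.visited i t).ncard
      ≤ 2 * N - (R.active t).ncard :=
  roundabout_sum_of_states_general R t
end

section
/- In the roundabout exploration model, let t ∈ [N], let s = |A(t)|, and let 1 ≤ i_1 < i_2 < ⋯ < i_s ≤ N be the initial states (indices) of the agents in A(t). Then for every ℓ ∈ [s−1], the half-open circular interval ⟨i_ℓ, i_{ℓ+1}) is contained in D_{i_ℓ}(t), and ⟨i_s, i_1) is contained in D_{i_s}(t). -/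
/-!
Track each agent by the number of forward moves it has made. Two agents standing on the same
position move together, so an agent never overtakes the agent ahead of it. As long as at least
two agents are active, non-redundancy forbids an active agent to complete a lap, so visited sets
only grow. Then, by induction on `t`: a point `x` strictly before the next active agent after
`j` lies in the visited set of the active agent `k₁` closest behind `x` at time `t`, hence is
still covered at time `t + 1` by some active agent `k₂`; if `k₂ ≠ j`, then `k₂` started behind
`j` and has passed `x`, so `j`, which `k₂` cannot overtake, has reached `x` as well.
-/

namespace Fin

variable {N : ℕ}

theorem val_sub_add_val_sub [NeZero N] (a b c : Fin N) :
    (b - a).val + (c - b).val = (c - a).val ∨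
      (b - a).val + (c - b).val = (c - a).val + N := by
  have h := val_add_eq_ite (c - b) (b - a)
  rw [sub_add_sub_cancel] at h
  have := (c - b).isLt
  have := (b - a).isLt
  split_ifs at h <;> omega

theorem val_sub_add_val_sub_of_ne [NeZero N] {a b : Fin N} (h : a ≠ b) :
    (b - a).val + (a - b).val = N := by
  have hba : (b - a).val ≠ 0 := by rw [Ne, val_eq_zero_iff, sub_eq_zero]; exact h.symm
  rcases val_sub_add_val_sub a b a with h' | h' <;> simp only [sub_self, val_zero] at h' <;> omega

theorem val_sub_lt_val_sub_of_le [NeZero N] {a b c : Fin N} (hne : b ≠ a)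
    (h : (c - a).val ≤ (c - b).val) : (c - a).val < (b - a).val := by
  have hba : (b - a).val ≠ 0 := by rw [Ne, val_eq_zero_iff, sub_eq_zero]; exact hne
  have := (c - b).isLt
  rcases val_sub_add_val_sub a b c with h' | h' <;> omega

theorem val_sub_le_val_sub {a b c : Fin N}
    (h : a < b ∧ b ≤ c ∨ c < a ∧ a < b ∨ b ≤ c ∧ c < a) : (b - a).val ≤ (c - a).val := by
  rcases h with ⟨h₁, h₂⟩ | ⟨h₁, h₂⟩ | ⟨h₁, h₂⟩
  · rw [sub_val_of_le h₁.le, sub_val_of_le (h₁.le.trans h₂)]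
    exact Nat.sub_le_sub_right h₂ _
  · rw [sub_val_of_le h₂.le, coe_sub_iff_lt.2 h₁]
    have := b.isLt
    omega
  · rw [coe_sub_iff_lt.2 (h₂.trans_le' h₁), coe_sub_iff_lt.2 h₂]
    have : b.val ≤ c.val := h₁
    omega

end Fin

theorem val_sub_lt_of_mem_cIntHalf {N : ℕ} [NeZero N] {i j x : Fin N} (hx : x ∈ cIntHalf i j) :
    (x - i).val < (j - i).val :=
  lt_of_le_of_ne hx.1 fun h => hx.2 (sub_left_injective (Fin.ext h))

namespace Roundabout

variable {N : ℕ} [NeZero N] (R : Roundabout N)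

open Fin.NatCast

open Classical in
noncomputable def moves (R : Roundabout N) (i : Fin N) : ℕ → ℕ
  | 0 => 0
  | t + 1 => R.moves i t + if R.state i t ∈ R.avail (t + 1) then 1 else 0

theorem state_eq_add_moves (i : Fin N) (t : ℕ) : R.state i t = i + (R.moves i t : Fin N) := by
  induction t with
  | zero => simp [moves, R.state_zero]
  | succ t ih =>
    by_cases h : R.state i t ∈ R.avail (t + 1)
    · rw [moves, if_pos h, R.state_succ_of_mem i t h, ih, Nat.cast_add, Nat.cast_one, add_assoc]
    · rw [moves, if_neg h, R.state_succ_of_not_mem i t h, ih, add_zero]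

theorem moves_le_moves_succ (i : Fin N) (t : ℕ) : R.moves i t ≤ R.moves i (t + 1) := by
  simp only [moves]
  split <;> omega

theorem moves_succ_le (i : Fin N) (t : ℕ) : R.moves i (t + 1) ≤ R.moves i t + 1 := by
  simp only [moves]
  split <;> omega

theorem moves_le (i : Fin N) (t : ℕ) : R.moves i t ≤ t := by
  induction t with
  | zero => rfl
  | succ t ih => exact (R.moves_succ_le i t).trans (Nat.succ_le_succ ih)

/-- No overtaking: agents on the same position take the same step. -/
theorem moves_le_val_sub_add_moves (i j : Fin N) (t : ℕ) :
    R.moves i t ≤ (j - i).val + R.moves j t := by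
  induction t with
  | zero => exact Nat.zero_le _
  | succ t ih =>
    rcases ih.lt_or_eq with hlt | heq
    · have := R.moves_succ_le i t
      have := R.moves_le_moves_succ j t
      omega
    · have hst : R.state i t = R.state j t := by
        rw [state_eq_add_moves, state_eq_add_moves, heq, Nat.cast_add, Fin.cast_val_eq_self,
          ← add_assoc, add_sub_cancel]
      simp only [moves]
      rw [hst]
      omega

theorem mem_visited_iff {i : Fin N} {t : ℕ} (h : R.moves i t < N) (x : Fin N) :
    x ∈ R.visited i t ↔ (x - i).val ≤ R.moves i t := by
  change (x - i).val ≤ (R.state i t - i).val ↔ _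
  rw [state_eq_add_moves, add_sub_cancel_left, Fin.val_natCast, Nat.mod_eq_of_lt h]

theorem self_mem_visited (i : Fin N) (t : ℕ) : i ∈ R.visited i t := by
  simp [visited, cInt]

theorem visited_subset_visited_succ {i : Fin N} {t : ℕ} (h : R.moves i (t + 1) < N) :
    R.visited i t ⊆ R.visited i (t + 1) := by
  intro x hx
  have := R.moves_le_moves_succ i t
  rw [R.mem_visited_iff (by omega)] at hx
  rw [R.mem_visited_iff h]
  omega

theorem visited_eq_univ {i : Fin N} {t : ℕ} (h : R.moves i t + 1 = N) :
    R.visited i t = Set.univ :=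
  Set.eq_univ_of_forall fun x => by
    rw [R.mem_visited_iff (by omega)]
    have := (x - i).isLt
    omega

theorem moves_add_two_le {u : ℕ} (hu : u < N) {k : Fin N} (hk : k ∈ R.active u)
    (hnt : (R.active u).Nontrivial) : R.moves k u + 2 ≤ N := by
  obtain ⟨k', hk', hne⟩ := hnt.exists_ne k
  by_contra hlap
  have hmoves : R.moves k u + 1 = N := by
    have := R.moves_le k u
    omega
  cases u with
  | zero =>
    have := k.isLt
    have := k'.isLt
    exact hne (Fin.ext (by simp only [moves] at hmoves; omega))
  | succ u =>
    exact R.active_nonredundant u k' hk' fun y _ =>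
      Set.mem_biUnion ⟨hk, hne.symm⟩ (by
        change y ∈ R.visited k (u + 1)
        rw [R.visited_eq_univ hmoves]
        trivial)

theorem mem_visited_of_mem_visited_of_lt {j k x : Fin N} {t : ℕ} (hj : R.moves j t < N)
    (hk : R.moves k t < N) (hx : (x - j).val < (k - j).val) (hxk : x ∈ R.visited k t) :
    x ∈ R.visited j t := by
  have hkj : k ≠ j := by
    rintro rfl
    simp at hx
  rw [R.mem_visited_iff hk] at hxk
  rw [R.mem_visited_iff hj]
  have := R.moves_le_val_sub_add_moves k j t
  have := Fin.val_sub_add_val_sub_of_ne hkj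
  rcases Fin.val_sub_add_val_sub k j x with h | h <;> omega

theorem mem_visited_of_forall_lt {u : ℕ} (hu : u ≤ N) {j x : Fin N} (hj : j ∈ R.active u)
    (hnt : (R.active u).Nontrivial)
    (hx : ∀ k ∈ R.active u, k ≠ j → (x - j).val < (k - j).val) : x ∈ R.visited j u := by
  induction u generalizing j x with
  | zero =>
    by_cases hxj : x = j
    · exact hxj ▸ R.self_mem_visited j 0
    · exact absurd (hx x (R.active_zero ▸ Set.mem_univ x) hxj) (lt_irrefl _)
  | succ u ih =>
    have hntu := hnt.mono (R.active_mono u)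
    have hmoves : ∀ k ∈ R.active u, R.moves k (u + 1) < N := fun k hk => by
      have := R.moves_add_two_le (by omega) hk hntu
      have := R.moves_succ_le k u
      omega
    obtain ⟨k₁, hk₁, hmin⟩ := (R.active u).exists_min_image (fun k => (x - k).val)
      (Set.toFinite _) ⟨j, R.active_mono u hj⟩
    have hxk₁ : x ∈ R.visited k₁ u :=
      ih (by omega) hk₁ hntu fun k hk hne => Fin.val_sub_lt_val_sub_of_le hne (hmin k hk)
    obtain ⟨k₂, hk₂, hxk₂⟩ : ∃ k₂ ∈ R.active (u + 1), x ∈ R.visited k₂ (u + 1) := by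
      have hcov : x ∈ ⋃ k ∈ R.active u, R.visited k (u + 1) :=
        Set.mem_biUnion hk₁ (R.visited_subset_visited_succ (hmoves k₁ hk₁) hxk₁)
      simpa [visited, ← R.active_cover] using hcov
    by_cases hk₂j : k₂ = j
    · exact hk₂j ▸ hxk₂
    · exact R.mem_visited_of_mem_visited_of_lt (hmoves j (R.active_mono u hj))
        (hmoves k₂ (R.active_mono u hk₂)) (hx k₂ hk₂ hk₂j) hxk₂

theorem cIntHalf_subset_visited {u : ℕ} (hu : u ≤ N) {j k : Fin N} (hj : j ∈ R.active u)
    (hk : k ∈ R.active u) (hnext : ∀ k' ∈ R.active u, k' ≠ j → (k - j).val ≤ (k' - j).val) :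
    cIntHalf j k ⊆ R.visited j u := by
  intro x hx
  have hxk := val_sub_lt_of_mem_cIntHalf hx
  have hkj : k ≠ j := by
    rintro rfl
    simp at hxk
  exact R.mem_visited_of_forall_lt hu hj ⟨j, hj, k, hk, hkj.symm⟩ fun k' hk' hne =>
    hxk.trans_le (hnext k' hk' hne)

end Roundabout

/-- **Lemma (interval cover).** Let `t ∈ [N]`, `s = |A(t)|`, and let
`e 0 < e 1 < ⋯ < e (s-1)` enumerate the initial states (indices) of the agents in
`A(t)`. Then each agent `a_{e ℓ}` has visited, by step `t`, the half-open circular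
interval from its own initial state to the initial state of the next active agent
(cyclically). -/
theorem roundabout_interval_cover {N : ℕ} [NeZero N] (R : Roundabout N)
    (t : ℕ) (ht : t ≤ N)
    (s : ℕ)
    (e : Fin s → Fin N) (hmono : StrictMono e) (hrange : Set.range e = R.active t) :
    (∀ ℓ : Fin s, ∀ h : ℓ.val + 1 < s,
      cIntHalf (e ℓ) (e ⟨ℓ.val + 1, h⟩) ⊆ R.visited (e ℓ) t) ∧
    (∀ h : 0 < s,
      cIntHalf (e ⟨s - 1, by omega⟩) (e ⟨0, h⟩) ⊆ R.visited (e ⟨s - 1, by omega⟩) t) := by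
  have hnext : ∀ ℓ m : Fin s, (∀ m', m' ≠ ℓ → (e m - e ℓ).val ≤ (e m' - e ℓ).val) →
      cIntHalf (e ℓ) (e m) ⊆ R.visited (e ℓ) t := by
    intro ℓ m h
    refine R.cIntHalf_subset_visited ht (hrange ▸ ⟨ℓ, rfl⟩) (hrange ▸ ⟨m, rfl⟩) ?_
    rintro _ hk' hne
    obtain ⟨m', rfl⟩ := hrange ▸ hk'
    exact h m' fun h' => hne (h' ▸ rfl)
  refine ⟨fun ℓ h => hnext _ _ fun m hm => Fin.val_sub_le_val_sub ?_,
    fun h => hnext _ _ fun m hm => Fin.val_sub_le_val_sub ?_⟩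
  · have hsucc : e ℓ < e ⟨ℓ.val + 1, h⟩ := hmono (Fin.lt_def.2 (Nat.lt_succ_self _))
    rcases lt_or_gt_of_ne hm with hlt | hgt
    · exact Or.inr (Or.inl ⟨hmono hlt, hsucc⟩)
    · exact Or.inl ⟨hsucc, hmono.monotone (Fin.le_def.2 hgt)⟩
  · have hm' : m.val < s - 1 := by
      have := m.isLt
      have : m.val ≠ s - 1 := fun h' => hm (Fin.ext h')
      omega
    exact Or.inr (Or.inr ⟨hmono.monotone (Fin.le_def.2 (Nat.zero_le _)),
      hmono (Fin.lt_def.2 hm')⟩)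
end

section
/- Let k ≥ 1 be an integer and set ρ = ⌈18k·ln(6k)⌉. Let S_1, …, S_ρ be finite nonempty sets, each of size at most 6k, let 𝓘 be a finite set with |𝓘| ≤ 6kρ, and for each i ∈ [ρ] let C_i ⊆ S_i × 𝓘 be a relation such that for every i ∈ [ρ] and every I ∈ 𝓘 there exists s ∈ S_i with (s, I) ∈ C_i. Call a tuple (s_1, …, s_ρ) ∈ S_1 × ⋯ × S_ρ I-covering, for I ∈ 𝓘, if (s_i, I) ∈ C_i for some i ∈ [ρ]. Then the number of tuples that are I-covering for every I ∈ 𝓘 is at least (1/12)·∏_{i∈[ρ]} |S_i|. -/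
/-- **Lemma (I-covering), abstract form.** Let `k ≥ 1`, `ρ = ⌈18k ln(6k)⌉`, let
`S 0, …, S (ρ-1)` be nonempty finite sets each of size at most `6k`, let `I` be a
finite set of size at most `6kρ`, and for each `i` let `C i` be a relation such that
every `J ∈ I` is related to some element of `S i`. Call a tuple `f` (with
`f i ∈ S i` for all `i`) `J`-covering if `C i (f i) J` holds for some `i`. Then at
least a `1/12` fraction of all tuples are `J`-covering for every `J ∈ I`. -/
theorem I_covering_count (k : ℕ) (hk : 1 ≤ k) (ρ : ℕ)
    (hρ : ρ = ⌈(18 * k : ℝ) * Real.log (6 * k)⌉₊)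
    (α β : Type*) (S : Fin ρ → Finset α)
    (hSne : ∀ i, (S i).Nonempty)
    (hScard : ∀ i, (S i).card ≤ 6 * k)
    (I : Finset β) (hI : I.card ≤ 6 * k * ρ)
    (C : Fin ρ → α → β → Prop)
    (hC : ∀ i : Fin ρ, ∀ J ∈ I, ∃ s ∈ S i, C i s J) :
    (1 / 12 : ℝ) * ∏ i : Fin ρ, ((S i).card : ℝ)
      ≤ (({f : Fin ρ → α | (∀ i, f i ∈ S i) ∧ ∀ J ∈ I, ∃ i, C i (f i) J}).ncard : ℝ) := by
  classical
  have hk1 : (1:ℝ) ≤ (k:ℝ) := by exact_mod_cast hk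
  have hK0 : (0:ℝ) < 6*(k:ℝ) := by linarith
  -- bounds on ρ
  have hR1 : (18 * (k:ℝ)) * Real.log (6 * (k:ℝ)) ≤ (ρ:ℝ) := by
    rw [hρ]; exact Nat.le_ceil _
  have hlog6 : Real.log 6 ≤ 11/6 := by
    have h1 : Real.log ((6:ℝ)^6) = 6 * Real.log 6 := by
      rw [Real.log_pow]; norm_num
    have h2 : ((6:ℝ)^6) = 2^15 * (46656/32768) := by norm_num
    have h3 : Real.log ((6:ℝ)^6) = 15 * Real.log 2 + Real.log (46656/32768) := by
      rw [h2, Real.log_mul (by norm_num) (by norm_num), Real.log_pow]; norm_num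
    have h4 : Real.log ((46656:ℝ)/32768) ≤ 46656/32768 - 1 :=
      Real.log_le_sub_one_of_pos (by norm_num)
    have h5 : Real.log 2 ≤ 0.6931471808 := le_of_lt Real.log_two_lt_d9
    norm_num at h1 h3 h4 h5 ⊢
    linarith [h1, h3, h4, h5]
  have hlogk : Real.log (6*(k:ℝ)) ≤ 11*(k:ℝ)/6 := by
    have hkp : (0:ℝ) < (k:ℝ) := by linarith
    rw [Real.log_mul (by norm_num) (ne_of_gt hkp)]
    have := Real.log_le_sub_one_of_pos hkp
    linarith
  have hR2 : (ρ:ℝ) ≤ 33 * (k:ℝ)^2 := by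
    have h : ρ ≤ 33 * k^2 := by
      rw [hρ]
      refine Nat.ceil_le.mpr ?_
      push_cast
      nlinarith [mul_le_mul_of_nonneg_left hlogk (by linarith : (0:ℝ) ≤ 18*(k:ℝ))]
    exact_mod_cast h
  -- combinatorial setup
  set T : Finset (Fin ρ → α) := Fintype.piFinset S with hT
  set P : (Fin ρ → α) → Prop := fun f => ∀ J ∈ I, ∃ i, C i (f i) J with hP
  have hset : {f : Fin ρ → α | (∀ i, f i ∈ S i) ∧ ∀ J ∈ I, ∃ i, C i (f i) J}
      = ↑(T.filter P) := by
    ext f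
    simp [hT, hP, Fintype.mem_piFinset]
  rw [hset, Set.ncard_coe_finset]
  have hsplit : (T.filter P).card + (T.filter (fun f => ¬ P f)).card = T.card :=
    Finset.card_filter_add_card_filter_not _
  have hTcard : T.card = ∏ i, (S i).card := Fintype.card_piFinset S
  set B : β → Finset (Fin ρ → α) :=
    fun J => Fintype.piFinset (fun i => (S i).filter (fun s => ¬ C i s J)) with hB
  have hsub : T.filter (fun f => ¬ P f) ⊆ I.biUnion B := by
    intro f hf
    rw [Finset.mem_filter] at hf
    obtain ⟨hfT, hnP⟩ := hf
    simp only [hP] at hnP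
    push_neg at hnP
    obtain ⟨J, hJ, hnc⟩ := hnP
    refine Finset.mem_biUnion.mpr ⟨J, hJ, ?_⟩
    rw [hB]
    rw [Fintype.mem_piFinset]
    intro i
    rw [Finset.mem_filter]
    exact ⟨(Fintype.mem_piFinset.mp hfT) i, hnc i⟩
  have hBJ : ∀ J ∈ I, (B J).card ≤ ∏ i, ((S i).card - 1) := by
    intro J hJ
    rw [hB, Fintype.card_piFinset]
    refine Finset.prod_le_prod' ?_
    intro i _
    obtain ⟨s, hs, hCs⟩ := hC i J hJ
    have hss : (S i).filter (fun s => ¬ C i s J) ⊂ S i :=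
      Finset.filter_ssubset.mpr ⟨s, hs, fun h => h hCs⟩
    have := Finset.card_lt_card hss
    omega
  have hBadle : (T.filter (fun f => ¬ P f)).card ≤ I.card * ∏ i, ((S i).card - 1) := by
    calc (T.filter (fun f => ¬ P f)).card
        ≤ (I.biUnion B).card := Finset.card_le_card hsub
      _ ≤ ∑ J ∈ I, (B J).card := Finset.card_biUnion_le
      _ ≤ ∑ J ∈ I, ∏ i, ((S i).card - 1) := Finset.sum_le_sum hBJ
      _ = I.card * ∏ i, ((S i).card - 1) := by rw [Finset.sum_const, smul_eq_mul]
  -- cast to ℝ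
  have hcast : ((∏ i, ((S i).card - 1) : ℕ) : ℝ) = ∏ i, (((S i).card : ℝ) - 1) := by
    rw [Nat.cast_prod]
    refine Finset.prod_congr rfl fun i _ => ?_
    rw [Nat.cast_sub (Finset.card_pos.mpr (hSne i))]
    norm_num
  have hfac : ∀ i : Fin ρ, ((S i).card : ℝ) - 1
      ≤ ((S i).card : ℝ) * Real.exp (-(1/(6*(k:ℝ)))) := by
    intro i
    have hc1 : (1:ℝ) ≤ ((S i).card : ℝ) := by
      exact_mod_cast Finset.card_pos.mpr (hSne i)
    have hcK : ((S i).card : ℝ) ≤ 6*(k:ℝ) := by exact_mod_cast hScard i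
    have hc0 : (0:ℝ) < ((S i).card : ℝ) := by linarith
    have e1 : 1 - 1/((S i).card : ℝ) ≤ Real.exp (-(1/((S i).card : ℝ))) := by
      have := Real.add_one_le_exp (-(1/((S i).card : ℝ))); linarith
    have e2 : Real.exp (-(1/((S i).card : ℝ))) ≤ Real.exp (-(1/(6*(k:ℝ)))) := by
      apply Real.exp_le_exp.mpr
      have : 1/(6*(k:ℝ)) ≤ 1/((S i).card : ℝ) := one_div_le_one_div_of_le hc0 hcK
      linarith
    have heq : ((S i).card : ℝ) - 1 = ((S i).card : ℝ) * (1 - 1/((S i).card : ℝ)) := by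
      field_simp
    rw [heq]
    calc ((S i).card : ℝ) * (1 - 1/((S i).card : ℝ))
        ≤ ((S i).card : ℝ) * Real.exp (-(1/((S i).card : ℝ))) :=
          mul_le_mul_of_nonneg_left e1 hc0.le
      _ ≤ ((S i).card : ℝ) * Real.exp (-(1/(6*(k:ℝ)))) :=
          mul_le_mul_of_nonneg_left e2 hc0.le
  have hprodR : ∏ i, (((S i).card:ℝ) - 1)
      ≤ (∏ i, ((S i).card:ℝ)) * Real.exp (-((ρ:ℝ)/(6*(k:ℝ)))) := by
    calc ∏ i, (((S i).card:ℝ) - 1)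
        ≤ ∏ i, (((S i).card:ℝ) * Real.exp (-(1/(6*(k:ℝ))))) :=
          Finset.prod_le_prod (fun i _ => by
            have hc1 : (1:ℝ) ≤ ((S i).card : ℝ) := by
              exact_mod_cast Finset.card_pos.mpr (hSne i)
            linarith) (fun i _ => hfac i)
      _ = (∏ i, ((S i).card:ℝ)) * Real.exp (-(1/(6*(k:ℝ)))) ^ ρ := by
          rw [Finset.prod_mul_distrib, Finset.prod_const, Finset.card_univ, Fintype.card_fin]
      _ = (∏ i, ((S i).card:ℝ)) * Real.exp (-((ρ:ℝ)/(6*(k:ℝ)))) := by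
          rw [← Real.exp_nat_mul]
          congr 1
          ring
  -- key scalar inequality
  have hexp3 : (6*(k:ℝ))^3 ≤ Real.exp ((ρ:ℝ)/(6*(k:ℝ))) := by
    have h1 : 3 * Real.log (6*(k:ℝ)) ≤ (ρ:ℝ)/(6*(k:ℝ)) := by
      rw [le_div_iff₀ hK0]
      nlinarith [hR1]
    calc (6*(k:ℝ))^3 = Real.exp (Real.log (6*(k:ℝ))) ^ 3 := by rw [Real.exp_log hK0]
      _ = Real.exp ((3:ℕ) * Real.log (6*(k:ℝ))) := by rw [Real.exp_nat_mul]
      _ ≤ Real.exp ((ρ:ℝ)/(6*(k:ℝ))) := Real.exp_le_exp.mpr (by push_cast; exact h1)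
  have hKey : 6*(k:ℝ) * (ρ:ℝ) * Real.exp (-((ρ:ℝ)/(6*(k:ℝ)))) ≤ 11/12 := by
    have h1 : 6*(k:ℝ) * (ρ:ℝ) ≤ (11/12) * Real.exp ((ρ:ℝ)/(6*(k:ℝ))) := by
      nlinarith [hexp3, hR2, hk1]
    have h2 : (0:ℝ) < Real.exp (-((ρ:ℝ)/(6*(k:ℝ)))) := Real.exp_pos _
    calc 6*(k:ℝ) * (ρ:ℝ) * Real.exp (-((ρ:ℝ)/(6*(k:ℝ))))
        ≤ ((11/12) * Real.exp ((ρ:ℝ)/(6*(k:ℝ)))) * Real.exp (-((ρ:ℝ)/(6*(k:ℝ)))) :=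
          mul_le_mul_of_nonneg_right h1 h2.le
      _ = 11/12 := by
          rw [mul_assoc, ← Real.exp_add]
          simp
  -- put it together
  have hprodpos : (0:ℝ) ≤ ∏ i, ((S i).card:ℝ) :=
    Finset.prod_nonneg (fun i _ => by positivity)
  have hIcast : ((I.card:ℕ):ℝ) ≤ 6*(k:ℝ) * (ρ:ℝ) := by exact_mod_cast hI
  have hprodm1nonneg : (0:ℝ) ≤ ∏ i, (((S i).card:ℝ) - 1) :=
    Finset.prod_nonneg (fun i _ => by
      have hc1 : (1:ℝ) ≤ ((S i).card : ℝ) := by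
        exact_mod_cast Finset.card_pos.mpr (hSne i)
      linarith)
  have hBadR : ((T.filter fun f => ¬ P f).card : ℝ) ≤ (11/12) * ∏ i, ((S i).card:ℝ) := by
    calc ((T.filter fun f => ¬ P f).card : ℝ)
        ≤ ((I.card * ∏ i, ((S i).card - 1) : ℕ) : ℝ) := by exact_mod_cast hBadle
      _ = (I.card:ℝ) * ∏ i, (((S i).card:ℝ) - 1) := by rw [Nat.cast_mul, hcast]
      _ ≤ (6*(k:ℝ) * (ρ:ℝ)) * ((∏ i, ((S i).card:ℝ)) * Real.exp (-((ρ:ℝ)/(6*(k:ℝ))))) :=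
          mul_le_mul hIcast hprodR hprodm1nonneg (by positivity)
      _ = (6*(k:ℝ) * (ρ:ℝ) * Real.exp (-((ρ:ℝ)/(6*(k:ℝ))))) * ∏ i, ((S i).card:ℝ) := by
          ring
      _ ≤ (11/12) * ∏ i, ((S i).card:ℝ) :=
          mul_le_mul_of_nonneg_right hKey hprodpos
  have hGB : ((T.filter P).card : ℝ) + ((T.filter fun f => ¬ P f).card : ℝ)
      = ∏ i, ((S i).card:ℝ) := by
    have h := hsplit
    rw [hTcard] at h
    exact_mod_cast h
  linarith
end

section
/- Let 𝒢 be a Δ-temporally connected temporal graph on vertex set V with lifetime L, and suppose the timeline [L] is partitioned into ρ consecutive intervals ('epochs') Ε_1, …, Ε_ρ, each containing at least Δ time steps. Suppose that for each j ∈ [ρ] there is a temporal walk W_j in 𝒢 all of whose edge-traversal times lie in Ε_j but not among the first Δ time steps of Ε_j, such that the vertex sets visited by W_1, …, W_ρ together cover V. Then, for every vertex v, there is a temporal walk starting at v whose edge-traversal times all lie in Ε_1 ∪ ⋯ ∪ Ε_ρ and which visits all vertices of V; in particular, 𝒢 can be explored from any vertex. -/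
/-- A temporal walk from `v` to `u` in the temporal graph whose snapshots are
`G 0, …, G (L-1)` (0-indexed timeline of lifetime `L`): a sequence of vertices
together with strictly increasing time steps such that each consecutive pair of
vertices is adjacent in the snapshot at the corresponding time. -/
def TWalk {V : Type*} {L : ℕ} (G : Fin L → SimpleGraph V) (v u : V) : Prop :=
  ∃ (ℓ : ℕ) (w : Fin (ℓ + 1) → V) (t : Fin ℓ → Fin L),
    StrictMono t ∧ w 0 = v ∧ w (Fin.last ℓ) = u ∧
    ∀ i : Fin ℓ, (G (t i)).Adj (w i.castSucc) (w i.succ)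

/-- The temporal graph `G` can be explored from `v` by a temporal walk of length
exactly `ℓ`: the walk starts at `v` and visits all vertices. -/
def ExploresIn {V : Type*} {L : ℕ} (G : Fin L → SimpleGraph V) (v : V) (ℓ : ℕ) : Prop :=
  ∃ (w : Fin (ℓ + 1) → V) (t : Fin ℓ → Fin L),
    StrictMono t ∧ w 0 = v ∧ (∀ x : V, ∃ i, w i = x) ∧
    ∀ i : Fin ℓ, (G (t i)).Adj (w i.castSucc) (w i.succ)

/-- The temporal graph `G` can be explored from `v` (within its lifetime; note that
any temporal walk automatically has length at most `L`). -/
def CanExploreFrom {V : Type*} {L : ℕ} (G : Fin L → SimpleGraph V) (v : V) : Prop :=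
  ∃ ℓ : ℕ, ExploresIn G v ℓ

/-- `G` is temporally connected: for every ordered pair of vertices there is a
temporal walk from the first to the second. -/
def TemporallyConnected {V : Type*} {L : ℕ} (G : Fin L → SimpleGraph V) : Prop :=
  ∀ v u : V, TWalk G v u

/-- `G` is `Δ`-temporally connected: every window of `Δ` consecutive snapshots is
temporally connected. -/
def DeltaTConnected {V : Type*} {L : ℕ} (Δ : ℕ) (G : Fin L → SimpleGraph V) : Prop :=
  ∀ a : ℕ, ∀ _ : a + Δ ≤ L,
    TemporallyConnected (fun i : Fin Δ => G ⟨a + i.val, by have := i.isLt; omega⟩)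

/-- `T` is a spanning tree of the graph `U`. -/
def IsSpanningTree {V : Type*} (T U : SimpleGraph V) : Prop :=
  T ≤ U ∧ T.IsTree

/-- The snapshot `H` is `k`-edge-deficient with respect to the graph `F`:
at most `k` edges of `F` are absent from `H`. -/
def KDeficientWrt {V : Type*} (F H : SimpleGraph V) (k : ℕ) : Prop :=
  (F.edgeSet \ H.edgeSet).ncard ≤ k


/-- Auxiliary: a temporal walk from `v` to `u` whose times lie in `[lo, hi)`
and which visits every vertex of `S`. -/
def TWalkOn {V : Type*} {L : ℕ} (G : Fin L → SimpleGraph V) (v u : V) (S : Set V)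
    (lo hi : ℕ) : Prop :=
  ∃ (ℓ : ℕ) (w : Fin (ℓ + 1) → V) (t : Fin ℓ → Fin L),
    StrictMono t ∧ w 0 = v ∧ w (Fin.last ℓ) = u ∧
    (∀ i : Fin ℓ, (G (t i)).Adj (w i.castSucc) (w i.succ)) ∧
    (∀ i : Fin ℓ, lo ≤ (t i).val ∧ (t i).val < hi) ∧
    (∀ x ∈ S, ∃ i, w i = x)

lemma TWalkOn.mono {V : Type*} {L : ℕ} {G : Fin L → SimpleGraph V} {v u : V}
    {S S' : Set V} {lo hi : ℕ} (h : TWalkOn G v u S lo hi) (hS : S' ⊆ S) :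
    TWalkOn G v u S' lo hi := by
  obtain ⟨ℓ, w, t, h1, h2, h3, h4, h5, h6⟩ := h
  exact ⟨ℓ, w, t, h1, h2, h3, h4, h5, fun x hx => h6 x (hS hx)⟩

lemma TWalkOn.nil {V : Type*} {L : ℕ} (G : Fin L → SimpleGraph V) (v : V)
    (lo hi : ℕ) : TWalkOn G v v (∅ : Set V) lo hi :=
  ⟨0, fun _ => v, Fin.elim0, fun i => i.elim0, rfl, rfl, fun i => i.elim0,
    fun i => i.elim0, fun _ hx => hx.elim⟩

lemma TWalkOn.append {V : Type*} {L : ℕ} {G : Fin L → SimpleGraph V} {v u z : V}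
    {S1 S2 : Set V} {lo mid hi : ℕ} (hlm : lo ≤ mid) (hmh : mid ≤ hi)
    (h1 : TWalkOn G v u S1 lo mid) (h2 : TWalkOn G u z S2 mid hi) :
    TWalkOn G v z (S1 ∪ S2) lo hi := by
  obtain ⟨ℓ1, w1, t1, ht1, hw10, hw1l, hadj1, hr1, hv1⟩ := h1
  obtain ⟨ℓ2, w2, t2, ht2, hw20, hw2l, hadj2, hr2, hv2⟩ := h2
  set w' : Fin (ℓ1 + ℓ2 + 1) → V :=
    fun k => if h : k.val ≤ ℓ1 then w1 ⟨k.val, by omega⟩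
      else w2 ⟨k.val - ℓ1, by have := k.isLt; omega⟩ with hw'
  set t' : Fin (ℓ1 + ℓ2) → Fin L :=
    fun k => if h : k.val < ℓ1 then t1 ⟨k.val, h⟩
      else t2 ⟨k.val - ℓ1, by have := k.isLt; omega⟩ with ht'
  have w'eq1 : ∀ (k : Fin (ℓ1 + ℓ2 + 1)) (h : k.val ≤ ℓ1) (m : Fin (ℓ1 + 1)),
      m.val = k.val → w' k = w1 m := fun k h m hm =>
    (dif_pos h).trans (congrArg w1 (Fin.ext hm.symm))
  have w'eq2 : ∀ (k : Fin (ℓ1 + ℓ2 + 1)) (h : ℓ1 < k.val) (m : Fin (ℓ2 + 1)),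
      ℓ1 + m.val = k.val → w' k = w2 m := fun k h m hm =>
    (dif_neg (by omega)).trans (congrArg w2 (Fin.ext (by simp; omega)))
  have t'eq1 : ∀ (k : Fin (ℓ1 + ℓ2)) (h : k.val < ℓ1) (m : Fin ℓ1),
      m.val = k.val → t' k = t1 m := fun k h m hm =>
    (dif_pos h).trans (congrArg t1 (Fin.ext hm.symm))
  have t'eq2 : ∀ (k : Fin (ℓ1 + ℓ2)) (h : ¬ k.val < ℓ1) (m : Fin ℓ2),
      ℓ1 + m.val = k.val → t' k = t2 m := fun k h m hm =>
    (dif_neg h).trans (congrArg t2 (Fin.ext (by simp; omega)))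
  have hmidv : w1 (Fin.last ℓ1) = w2 0 := by rw [hw1l, hw20]
  refine ⟨ℓ1 + ℓ2, w', t', ?_, ?_, ?_, ?_, ?_, ?_⟩
  · -- StrictMono
    intro i j hij
    have hij' : i.val < j.val := hij
    by_cases hi : i.val < ℓ1 <;> by_cases hj : j.val < ℓ1
    · rw [t'eq1 i hi ⟨i.val, hi⟩ rfl, t'eq1 j hj ⟨j.val, hj⟩ rfl]
      exact ht1 (show (⟨i.val, hi⟩ : Fin ℓ1) < ⟨j.val, hj⟩ from hij')
    · rw [t'eq1 i hi ⟨i.val, hi⟩ rfl,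
        t'eq2 j hj ⟨j.val - ℓ1, by have := j.isLt; omega⟩ (by simp; omega)]
      have a := (hr1 ⟨i.val, hi⟩).2
      have c := (hr2 ⟨j.val - ℓ1, by have := j.isLt; omega⟩).1
      exact Fin.lt_def.mpr (by omega)
    · omega
    · rw [t'eq2 i hi ⟨i.val - ℓ1, by have := i.isLt; omega⟩ (by simp; omega),
        t'eq2 j hj ⟨j.val - ℓ1, by have := j.isLt; omega⟩ (by simp; omega)]
      exact ht2 (show (⟨i.val - ℓ1, _⟩ : Fin ℓ2) < ⟨j.val - ℓ1, _⟩ from by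
        simp only [Fin.mk_lt_mk]; omega)
  · -- start
    rw [w'eq1 0 (by simp) 0 rfl]
    exact hw10
  · -- end
    by_cases h2z : ℓ2 = 0
    · have hle : (Fin.last (ℓ1 + ℓ2)).val ≤ ℓ1 := by simp [Fin.last]; omega
      rw [w'eq1 (Fin.last (ℓ1 + ℓ2)) hle (Fin.last ℓ1) (by simp [Fin.last]; omega)]
      rw [hmidv, ← hw2l]
      exact congrArg w2 (Fin.ext (by simp [Fin.last]; omega))
    · rw [w'eq2 (Fin.last (ℓ1 + ℓ2)) (by simp [Fin.last]; omega) (Fin.last ℓ2)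
        (by simp [Fin.last])]
      exact hw2l
  · -- adjacency
    intro i
    by_cases hi : i.val < ℓ1
    · rw [t'eq1 i hi ⟨i.val, hi⟩ rfl,
        w'eq1 i.castSucc (by simp only [Fin.coe_castSucc]; omega)
          ((⟨i.val, hi⟩ : Fin ℓ1).castSucc) (by simp),
        w'eq1 i.succ (by simp only [Fin.val_succ]; omega)
          ((⟨i.val, hi⟩ : Fin ℓ1).succ) (by simp)]
      exact hadj1 ⟨i.val, hi⟩
    · have hi' : ℓ1 ≤ i.val := by omega
      have hlt : i.val - ℓ1 < ℓ2 := by have := i.isLt; omega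
      rw [t'eq2 i hi ⟨i.val - ℓ1, hlt⟩ (by simp; omega),
        w'eq2 i.succ (by simp only [Fin.val_succ]; omega)
          ((⟨i.val - ℓ1, hlt⟩ : Fin ℓ2).succ) (by simp only [Fin.val_succ]; omega)]
      have e1 : w' i.castSucc = w2 (⟨i.val - ℓ1, hlt⟩ : Fin ℓ2).castSucc := by
        by_cases heq : i.val = ℓ1
        · rw [w'eq1 i.castSucc (by simp only [Fin.coe_castSucc]; omega) (Fin.last ℓ1)
            (by simp only [Fin.val_last, Fin.coe_castSucc]; omega), hmidv]
          exact congrArg w2 (Fin.ext (by simp only [Fin.val_zero, Fin.coe_castSucc]; omega))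
        · rw [w'eq2 i.castSucc (by simp only [Fin.coe_castSucc]; omega)
            ((⟨i.val - ℓ1, hlt⟩ : Fin ℓ2).castSucc) (by simp only [Fin.coe_castSucc]; omega)]
      rw [e1]
      exact hadj2 ⟨i.val - ℓ1, hlt⟩
  · -- time range
    intro i
    by_cases hi : i.val < ℓ1
    · rw [t'eq1 i hi ⟨i.val, hi⟩ rfl]
      have := hr1 ⟨i.val, hi⟩
      omega
    · rw [t'eq2 i hi ⟨i.val - ℓ1, by have := i.isLt; omega⟩ (by simp; omega)]
      have := hr2 ⟨i.val - ℓ1, by have := i.isLt; omega⟩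
      omega
  · -- visiting
    intro x hx
    rcases hx with hx | hx
    · obtain ⟨i, hw⟩ := hv1 x hx
      have hk : i.val < ℓ1 + ℓ2 + 1 := by have := i.isLt; omega
      refine ⟨⟨i.val, hk⟩, ?_⟩
      rw [w'eq1 ⟨i.val, hk⟩ (show i.val ≤ ℓ1 from by have := i.isLt; omega) i rfl]
      exact hw
    · obtain ⟨i, hw⟩ := hv2 x hx
      by_cases hz : i.val = 0
      · have hk : ℓ1 < ℓ1 + ℓ2 + 1 := by omega
        refine ⟨⟨ℓ1, hk⟩, ?_⟩
        rw [w'eq1 ⟨ℓ1, hk⟩ (le_refl ℓ1) (Fin.last ℓ1) rfl, hmidv, ← hw]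
        exact congrArg w2 (Fin.ext (by simp only [Fin.val_zero]; omega))
      · have hk : ℓ1 + i.val < ℓ1 + ℓ2 + 1 := by have := i.isLt; omega
        refine ⟨⟨ℓ1 + i.val, hk⟩, ?_⟩
        rw [w'eq2 ⟨ℓ1 + i.val, hk⟩ (show ℓ1 < ℓ1 + i.val from by omega) i rfl]
        exact hw

/-- Repositioning: a `Δ`-window walk lifted to the full timeline. -/
lemma window_reposition {V : Type*} {L Δ : ℕ} {G : Fin L → SimpleGraph V}
    (hΔ : DeltaTConnected Δ G) (a : ℕ) (ha : a + Δ ≤ L) (x y : V) :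
    TWalkOn G x y (∅ : Set V) a (a + Δ) := by
  obtain ⟨ℓ, w, t, htm, hw0, hwl, hadj⟩ := hΔ a ha x y
  refine ⟨ℓ, w, fun i => ⟨a + (t i).val, by have := (t i).isLt; omega⟩, ?_, hw0, hwl,
    ?_, ?_, fun _ hx => hx.elim⟩
  · intro i j hij
    have := htm hij
    exact Fin.lt_def.mpr (by simp only [Fin.lt_def] at this ⊢; omega)
  · intro i
    exact hadj i
  · intro i
    have := (t i).isLt
    simp only
    omega

/-- **Lemma (tuple to exploration), generalized.** Let `𝒢` be a `Δ`-temporally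
connected temporal graph whose (0-indexed) timeline `{0, …, L-1}` is partitioned
into `ρ` consecutive epochs by boundaries `b 0 = 0 ≤ b 1 ≤ ⋯ ≤ b ρ = L`, each epoch
containing at least `Δ` time steps. Suppose that for each epoch `j` there is a
temporal walk `W_j` whose edge-traversal times all lie in epoch `j` but not among
its first `Δ` time steps, such that the vertices visited by `W_0, …, W_{ρ-1}`
together cover all of `V`. Then, for every vertex `v`, there is a temporal walk
starting at `v` that visits all vertices; in particular `𝒢` can be explored from
any vertex. -/
theorem tuple_to_exploration (V : Type*) [Fintype V] (L Δ ρ : ℕ)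
    (G : Fin L → SimpleGraph V)
    (hΔ : DeltaTConnected Δ G)
    (b : Fin (ρ + 1) → ℕ) (hb0 : b 0 = 0) (hbL : b (Fin.last ρ) = L)
    (hbmono : Monotone b)
    (hlen : ∀ j : Fin ρ, b j.castSucc + Δ ≤ b j.succ)
    (ℓ : Fin ρ → ℕ) (w : ∀ j : Fin ρ, Fin (ℓ j + 1) → V)
    (τ : ∀ j : Fin ρ, Fin (ℓ j) → Fin L)
    (hτmono : ∀ j, StrictMono (τ j))
    (hτrange : ∀ j i, b j.castSucc + Δ ≤ (τ j i).val ∧ (τ j i).val < b j.succ)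
    (hadj : ∀ j i, (G (τ j i)).Adj ((w j) i.castSucc) ((w j) i.succ))
    (hcover : ∀ x : V, ∃ j i, w j i = x) :
    ∀ v : V, CanExploreFrom G v := by
  intro v
  have hbDL : ∀ j : Fin ρ, b j.castSucc + Δ ≤ L := fun j =>
    le_trans (hlen j) (hbL ▸ hbmono (Fin.le_last j.succ))
  have key : ∀ m : Fin (ρ + 1), ∃ u, TWalkOn G v u
      {x | ∃ j : Fin ρ, j.val < m.val ∧ ∃ i, w j i = x} 0 (b m) := by
    intro m
    induction m using Fin.induction with
    | zero =>
      refine ⟨v, (TWalkOn.nil G v 0 (b 0)).mono ?_⟩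
      rintro x ⟨j, hj, -⟩
      exact absurd hj (Nat.not_lt_zero _)
    | succ j ih =>
      obtain ⟨u, hu⟩ := ih
      have hW : TWalkOn G (w j 0) (w j (Fin.last (ℓ j))) (Set.range (w j))
          (b j.castSucc + Δ) (b j.succ) :=
        ⟨ℓ j, w j, τ j, hτmono j, rfl, rfl, hadj j, hτrange j,
          by rintro x ⟨i, rfl⟩; exact ⟨i, rfl⟩⟩
      have hB := window_reposition hΔ (b j.castSucc) (hbDL j) u (w j 0)
      have hAB := TWalkOn.append (Nat.zero_le _) (Nat.le_add_right _ _) hu hB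
      have hABC := TWalkOn.append (Nat.zero_le _) (hlen j) hAB hW
      refine ⟨w j (Fin.last (ℓ j)), hABC.mono ?_⟩
      rintro x ⟨j', hj', i, rfl⟩
      by_cases hjj : j'.val < j.val
      · exact Or.inl (Or.inl ⟨j', hjj, i, rfl⟩)
      · have hj'j : j' = j := Fin.ext (by
          simp only [Fin.val_succ, Fin.coe_castSucc] at hj'
          omega)
        subst hj'j
        exact Or.inr ⟨i, rfl⟩
  obtain ⟨u, hu⟩ := key (Fin.last ρ)
  rw [hbL] at hu
  obtain ⟨l', w', t', h1, h2, h3, h4, h5, h6⟩ := hu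
  exact ⟨l', w', t', h1, h2, fun x => by
    obtain ⟨j, i, hx⟩ := hcover x
    exact h6 x ⟨j, j.isLt, i, hx⟩, h4⟩
end

section
/- Let 𝒢 = ⟨G_1, G_2, …, G_L⟩ be a k-edge-deficient temporal graph with underlying graph G, and let q be a positive integer with 2q ≤ L. For each edge e of G, let w(e) = |{i ∈ [2q] : e ∉ E(G_i)}|, and let T be a spanning tree of G of minimum total weight ∑_{e ∈ E(T)} w(e) among all spanning trees of G. Then at least q of the snapshots G_1, …, G_{2q} are 2k-edge-deficient with respect to T. In particular, there exists a spanning tree T of G such that at least q of the first 2q snapshots of 𝒢 are 2k-edge-deficient with respect to T. -/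
/-- **Lemma (finding a good tree).** Let `𝒢` be a `k`-edge-deficient temporal graph
with underlying graph `U`, and let `q ≥ 1` with `2q ≤ L`. Weight each edge `e` of
`U` by the number `w e` of snapshots among the first `2q` in which `e` is missing,
and let `T` be a spanning tree of `U` of minimum total weight. Then at least `q` of
the first `2q` snapshots are `2k`-edge-deficient with respect to `T`. -/
theorem find_good_tree (V : Type*) [Fintype V] (L k q : ℕ) (hq : 1 ≤ q)
    (hL : 2 * q ≤ L)
    (G : Fin L → SimpleGraph V)
    (hdef : ∃ T0 : SimpleGraph V, IsSpanningTree T0 (⨆ t, G t) ∧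
      ∀ t : Fin L, KDeficientWrt T0 (G t) k)
    (w : Sym2 V → ℕ)
    (hw : ∀ e : Sym2 V, w e = {i : Fin L | i.val < 2 * q ∧ e ∉ (G i).edgeSet}.ncard)
    (T : SimpleGraph V) (hT : IsSpanningTree T (⨆ t, G t))
    (hmin : ∀ T' : SimpleGraph V, IsSpanningTree T' (⨆ t, G t) →
      ∑ e ∈ T.edgeSet.toFinite.toFinset, w e ≤ ∑ e ∈ T'.edgeSet.toFinite.toFinset, w e) :
    q ≤ {i : Fin L | i.val < 2 * q ∧ KDeficientWrt T (G i) (2 * k)}.ncard := by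
  classical
  obtain ⟨T0, hT0, hdef0⟩ := hdef
  set I : Finset (Fin L) := Finset.univ.filter (fun i => i.val < 2 * q) with hI
  have hIcard : I.card = 2 * q := by
    have : I = Finset.attachFin (Finset.range (2 * q))
        (fun m hm => lt_of_lt_of_le (Finset.mem_range.mp hm) hL) := by
      ext i; simp [hI, Finset.mem_attachFin]
    rw [this, Finset.card_attachFin, Finset.card_range]
  have key : ∀ (F : SimpleGraph V) (i : Fin L),
      (F.edgeSet \ (G i).edgeSet).ncard =
        ((F.edgeSet.toFinite.toFinset).filter (fun e => e ∉ (G i).edgeSet)).card := by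
    intro F i
    rw [← Set.ncard_coe_finset]
    congr 1
    ext e
    simp only [Finset.coe_filter, Set.Finite.mem_toFinset, Set.mem_diff, Set.mem_setOf_eq]
  have hwcard : ∀ e, w e = (I.filter (fun i => e ∉ (G i).edgeSet)).card := by
    intro e
    rw [hw, ← Set.ncard_coe_finset]
    congr 1
    ext i
    simp [hI]
  have swap : ∀ (E : Finset (Sym2 V)),
      ∑ i ∈ I, ((E.filter (fun e => e ∉ (G i).edgeSet)).card) = ∑ e ∈ E, w e := by
    intro E
    simp_rw [hwcard, Finset.card_filter]
    exact Finset.sum_comm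
  have h1 : ∑ e ∈ T0.edgeSet.toFinite.toFinset, w e ≤ 2 * q * k := by
    rw [← swap]
    calc ∑ i ∈ I, ((T0.edgeSet.toFinite.toFinset).filter (fun e => e ∉ (G i).edgeSet)).card
        ≤ ∑ _i ∈ I, k := Finset.sum_le_sum fun i _ => by rw [← key]; exact hdef0 i
      _ = 2 * q * k := by rw [Finset.sum_const, hIcard, smul_eq_mul]
  have h2 : ∑ i ∈ I, ((T.edgeSet.toFinite.toFinset).filter (fun e => e ∉ (G i).edgeSet)).card
      ≤ 2 * q * k := by
    rw [swap]; exact le_trans (hmin T0 hT0) h1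
  set S : Finset (Fin L) := I.filter (fun i => (T.edgeSet \ (G i).edgeSet).ncard ≤ 2 * k)
    with hS
  have hgoal : {i : Fin L | i.val < 2 * q ∧ KDeficientWrt T (G i) (2 * k)} = ↑S := by
    ext i; simp [hS, hI, KDeficientWrt]
  rw [hgoal, Set.ncard_coe_finset]
  by_contra hlt
  push_neg at hlt
  set B : Finset (Fin L) :=
    I.filter (fun i => ¬ ((T.edgeSet \ (G i).edgeSet).ncard ≤ 2 * k)) with hB
  have hsplit : S.card + B.card = 2 * q := by
    rw [hS, hB, Finset.card_filter_add_card_filter_not, hIcard]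
  have hBq : q + 1 ≤ B.card := by omega
  have hlow : B.card * (2 * k + 1) ≤
      ∑ i ∈ I, ((T.edgeSet.toFinite.toFinset).filter (fun e => e ∉ (G i).edgeSet)).card := by
    calc B.card * (2 * k + 1)
        = ∑ _i ∈ B, (2 * k + 1) := by rw [Finset.sum_const, smul_eq_mul]
      _ ≤ ∑ i ∈ B, ((T.edgeSet.toFinite.toFinset).filter (fun e => e ∉ (G i).edgeSet)).card := by
          refine Finset.sum_le_sum fun i hi => ?_
          rw [← key]
          have := (Finset.mem_filter.mp hi).2
          omega
      _ ≤ _ := Finset.sum_le_sum_of_subset (Finset.filter_subset _ _)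
  have : (q + 1) * (2 * k + 1) ≤ 2 * q * k :=
    le_trans (Nat.mul_le_mul_right _ hBq) (le_trans hlow h2)
  nlinarith
end

section
/- Let 𝒢 = ⟨G_1, …, G_L⟩ be an always-connected temporal graph on n vertices with lifetime L ≥ n − 1. Then 𝒢 is (n−1)-temporally connected; that is, for every t ∈ [L − n + 2] and every ordered pair of vertices v, u, there is a temporal walk from v to u in ⟨G_t, G_{t+1}, …, G_{t+n−2}⟩. -/
namespace Fin

lemma strictMono_snoc {α : Type*} [Preorder α] {n : ℕ} {f : Fin n → α} (hf : StrictMono f)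
    {x : α} (hx : ∀ i, f i < x) : StrictMono (Fin.snoc f x : Fin (n + 1) → α) := by
  intro a b hab
  induction b using Fin.lastCases with
  | last =>
    obtain ⟨a, rfl⟩ := Fin.exists_castSucc_eq.mpr (Fin.ne_last_of_lt hab)
    simpa using hx a
  | cast b =>
    obtain ⟨a, rfl⟩ :=
      Fin.exists_castSucc_eq.mpr (Fin.ne_last_of_lt (hab.trans (castSucc_lt_last b)))
    simpa using hf (castSucc_lt_castSucc_iff.mp hab)

end Fin

section TemporalWalk

variable {V : Type*} {L : ℕ} (G : Fin L → SimpleGraph V)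

def TWalkBefore (j : ℕ) (v u : V) : Prop :=
  ∃ (ℓ : ℕ) (w : Fin (ℓ + 1) → V) (t : Fin ℓ → Fin L),
    StrictMono t ∧ w 0 = v ∧ w (Fin.last ℓ) = u ∧ (∀ i, (t i : ℕ) < j) ∧
    ∀ i : Fin ℓ, (G (t i)).Adj (w i.castSucc) (w i.succ)

variable {G}

namespace TWalkBefore

lemma refl (j : ℕ) (v : V) : TWalkBefore G j v v :=
  ⟨0, fun _ => v, Fin.elim0, fun i => i.elim0, rfl, rfl, fun i => i.elim0, fun i => i.elim0⟩

lemma mono {j k : ℕ} {v u : V} (h : TWalkBefore G j v u) (hjk : j ≤ k) : TWalkBefore G k v u :=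
  let ⟨ℓ, w, t, hmono, h0, hlast, hlt, hadj⟩ := h
  ⟨ℓ, w, t, hmono, h0, hlast, fun i => (hlt i).trans_le hjk, hadj⟩

lemma tWalk {j : ℕ} {v u : V} (h : TWalkBefore G j v u) : TWalk G v u :=
  let ⟨ℓ, w, t, hmono, h0, hlast, _, hadj⟩ := h
  ⟨ℓ, w, t, hmono, h0, hlast, hadj⟩

lemma snoc {s : Fin L} {v x y : V} (h : TWalkBefore G s v x) (hxy : (G s).Adj x y) :
    TWalkBefore G (s + 1) v y := by
  obtain ⟨ℓ, w, t, hmono, h0, hlast, hlt, hadj⟩ := h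
  refine ⟨ℓ + 1, Fin.snoc w y, Fin.snoc t s, Fin.strictMono_snoc hmono hlt, ?_, ?_, ?_, ?_⟩
  · rw [← Fin.castSucc_zero, Fin.snoc_castSucc, h0]
  · simp
  · intro i
    induction i using Fin.lastCases with
    | last => simp
    | cast i => simpa using (hlt i).trans (Nat.lt_succ_self _)
  · intro i
    induction i using Fin.lastCases with
    | last => simpa [hlast] using hxy
    | cast i =>
      rw [Fin.succ_castSucc]
      simpa only [Fin.snoc_castSucc] using hadj i

end TWalkBefore

lemma setOf_tWalkBefore_ssubset_succ {s : Fin L} (hG : (G s).Preconnected) {v u : V}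
    (hu : ¬ TWalkBefore G s v u) :
    {x | TWalkBefore G s v x} ⊂ {x | TWalkBefore G (s + 1) v x} := by
  obtain ⟨d, -, hfst, hsnd⟩ := (hG v u).some.exists_boundary_dart {x | TWalkBefore G s v x}
    (TWalkBefore.refl s v) hu
  refine Set.ssubset_iff_of_subset (fun x hx => TWalkBefore.mono hx s.val.le_succ) |>.mpr ?_
  exact ⟨d.snd, TWalkBefore.snoc hfst d.adj, hsnd⟩

lemma min_le_ncard_setOf_tWalkBefore [Finite V] (hG : ∀ t, (G t).Preconnected) (v : V) :
    ∀ j ≤ L, min (j + 1) (Nat.card V) ≤ {x | TWalkBefore G j v x}.ncard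
  | 0, _ => (min_le_left _ _).trans <|
      ((Set.ncard_pos (Set.toFinite _)).mpr ⟨v, TWalkBefore.refl 0 v⟩)
  | j + 1, hj => by
    have ih := min_le_ncard_setOf_tWalkBefore hG v j (by omega)
    by_cases hall : ∀ u, TWalkBefore G j v u
    · have huniv : {x | TWalkBefore G (j + 1) v x} = Set.univ :=
        Set.eq_univ_of_forall fun u => (hall u).mono j.le_succ
      rw [huniv, Set.ncard_univ]
      exact min_le_right _ _
    · push Not at hall
      obtain ⟨u, hu⟩ := hall
      have : {x | TWalkBefore G j v x}.ncard < {x | TWalkBefore G (j + 1) v x}.ncard :=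
        Set.ncard_lt_ncard (setOf_tWalkBefore_ssubset_succ (s := ⟨j, hj⟩) (hG _) hu)
      omega

theorem temporallyConnected_of_preconnected [Finite V] (hL : Nat.card V - 1 ≤ L)
    (hG : ∀ t, (G t).Preconnected) : TemporallyConnected G := by
  intro v u
  have hcard := min_le_ncard_setOf_tWalkBefore hG v _ hL
  have hpos : 0 < Nat.card V := Nat.card_pos_iff.mpr ⟨⟨v⟩, inferInstance⟩
  have huniv : {x | TWalkBefore G (Nat.card V - 1) v x} = Set.univ :=
    Set.eq_of_subset_of_ncard_le (Set.subset_univ _) (by rw [Set.ncard_univ]; omega)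
  exact (Set.eq_univ_iff_forall.mp huniv u).tWalk

end TemporalWalk

theorem always_connected_temporally_connected_general (V : Type*) [Fintype V] (n L : ℕ)
    (hn : Fintype.card V = n)
    (G : Fin L → SimpleGraph V)
    (hconn : ∀ t : Fin L, (G t).Connected) :
    DeltaTConnected (n - 1) G := by
  intro a _
  refine temporallyConnected_of_preconnected ?_ fun _ => (hconn _).preconnected
  rw [Nat.card_eq_fintype_card, hn]

/-- **Fact (Michail–Spirakis).** Every always-connected temporal graph on `n`
vertices with lifetime `L ≥ n - 1` is `(n-1)`-temporally connected: every window of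
`n - 1` consecutive snapshots is temporally connected. -/
theorem always_connected_temporally_connected (V : Type*) [Fintype V] (n L : ℕ)
    (hn : Fintype.card V = n) (hL : n - 1 ≤ L)
    (G : Fin L → SimpleGraph V)
    (hconn : ∀ t : Fin L, (G t).Connected) :
    DeltaTConnected (n - 1) G :=
  always_connected_temporally_connected_general V n L hn G hconn
end
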